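/- Let x₁ ∈ ℝ^N be a unit vector, and for V(t) ∈ ℝ^N define c(t) = x₁ᵀV(t) and ξ(t) = V(t) - c(t)x₁. If c(t) ≤ c(0)/(1+t), ‖ξ(t)‖₂ ≤ ‖ξ(0)‖₂/(1+t), c(t) ≥ 0, c(0) ≥ 0, and V(0) = u (the all-ones vector), then the prevalence y(t) = (1/N)uᵀV(t) satisfies y(t) ≤ 1/(1+t). -/
import Mathlib


/-- The Euclidean norm of a vector in `Fin N → ℝ`. -/
noncomputable def norm2 {N : ℕ} (v : Fin N → ℝ) : ℝ := Real.sqrt (∑ i, v i ^ 2)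

theorem stmt17 (N : ℕ) (x₁ : Fin N → ℝ) (hx : ∑ i, x₁ i ^ 2 = 1)
    (V : ℝ → Fin N → ℝ) (c : ℝ → ℝ) (ξ : ℝ → Fin N → ℝ)
    (hc : ∀ t, c t = ∑ i, x₁ i * V t i)
    (hξ : ∀ t, ξ t = fun i => V t i - c t * x₁ i)
    (hcb : ∀ t ≥ (0:ℝ), c t ≤ c 0 / (1 + t))
    (hξb : ∀ t ≥ (0:ℝ), norm2 (ξ t) ≤ norm2 (ξ 0) / (1 + t))
    (hcpos : ∀ t ≥ (0:ℝ), 0 ≤ c t)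
    (hV0 : V 0 = fun _ => 1) :
    ∀ t ≥ (0:ℝ), (1 / (N : ℝ)) * ∑ i, V t i ≤ 1 / (1 + t) := by
  intro t ht
  have h1t : (0:ℝ) < 1 + t := by linarith
  -- orthogonality
  have orth : ∀ s, ∑ i, x₁ i * ξ s i = 0 := by
    intro s
    have : ∑ i, x₁ i * ξ s i = (∑ i, x₁ i * V s i) - c s * ∑ i, x₁ i ^ 2 := by
      simp only [hξ]
      rw [Finset.mul_sum]
      rw [← Finset.sum_sub_distrib]
      apply Finset.sum_congr rfl
      intro i _
      ring
    rw [this, hx, ← hc s]; ring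
  -- decomposition of V
  have hVdec : ∀ s i, V s i = c s * x₁ i + ξ s i := by
    intro s i; simp [hξ]
  -- inner product identity
  have key : ∑ i, V 0 i * V t i = c 0 * c t + ∑ i, ξ 0 i * ξ t i := by
    have expand : ∀ i, V 0 i * V t i
        = c 0 * c t * x₁ i ^ 2 + c 0 * (x₁ i * ξ t i) + c t * (x₁ i * ξ 0 i)
          + ξ 0 i * ξ t i := by
      intro i; rw [hVdec 0 i, hVdec t i]; ring
    calc ∑ i, V 0 i * V t i
        = c 0 * c t * ∑ i, x₁ i ^ 2 + c 0 * ∑ i, x₁ i * ξ t i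
          + c t * ∑ i, x₁ i * ξ 0 i + ∑ i, ξ 0 i * ξ t i := by
          simp only [expand, Finset.sum_add_distrib, Finset.mul_sum]
      _ = c 0 * c t + ∑ i, ξ 0 i * ξ t i := by
          rw [hx, orth 0, orth t]; ring
  -- norms
  have hn0 : 0 ≤ norm2 (ξ 0) := Real.sqrt_nonneg _
  have hn0sq : norm2 (ξ 0) ^ 2 = ∑ i, ξ 0 i ^ 2 := by
    unfold norm2
    exact Real.sq_sqrt (Finset.sum_nonneg fun i _ => sq_nonneg _)
  -- Cauchy-Schwarz
  have cs : ∑ i, ξ 0 i * ξ t i ≤ norm2 (ξ 0) * norm2 (ξ t) := by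
    unfold norm2
    exact Real.sum_mul_le_sqrt_mul_sqrt Finset.univ _ _
  -- N identity
  have hNid : (N : ℝ) = c 0 ^ 2 + ∑ i, ξ 0 i ^ 2 := by
    have : ∑ i, V 0 i * V 0 i = (N : ℝ) := by simp [hV0]
    rw [← this]
    have key0 : ∑ i, V 0 i * V 0 i = c 0 * c 0 + ∑ i, ξ 0 i * ξ 0 i := by
      have expand : ∀ i, V 0 i * V 0 i
          = c 0 * c 0 * x₁ i ^ 2 + 2 * (c 0 * (x₁ i * ξ 0 i)) + ξ 0 i * ξ 0 i := by
        intro i; rw [hVdec 0 i]; ring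
      calc ∑ i, V 0 i * V 0 i
          = c 0 * c 0 * ∑ i, x₁ i ^ 2 + 2 * (c 0 * ∑ i, x₁ i * ξ 0 i)
            + ∑ i, ξ 0 i * ξ 0 i := by
            simp only [expand, Finset.sum_add_distrib, Finset.mul_sum]
        _ = c 0 * c 0 + ∑ i, ξ 0 i * ξ 0 i := by rw [hx, orth 0]; ring
    rw [key0]
    ring_nf
  -- main bound
  have hc0 : 0 ≤ c 0 := hcpos 0 le_rfl
  have hsum : ∑ i, V t i ≤ (N : ℝ) / (1 + t) := by
    have h1 : c 0 * c t ≤ c 0 ^ 2 / (1 + t) := by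
      have := hcb t ht
      calc c 0 * c t ≤ c 0 * (c 0 / (1 + t)) := by
            exact mul_le_mul_of_nonneg_left this hc0
        _ = c 0 ^ 2 / (1 + t) := by ring
    have h2 : ∑ i, ξ 0 i * ξ t i ≤ (∑ i, ξ 0 i ^ 2) / (1 + t) := by
      calc ∑ i, ξ 0 i * ξ t i ≤ norm2 (ξ 0) * norm2 (ξ t) := cs
        _ ≤ norm2 (ξ 0) * (norm2 (ξ 0) / (1 + t)) :=
            mul_le_mul_of_nonneg_left (hξb t ht) hn0
        _ = norm2 (ξ 0) ^ 2 / (1 + t) := by ring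
        _ = (∑ i, ξ 0 i ^ 2) / (1 + t) := by rw [hn0sq]
    have hVsum : ∑ i, V t i = ∑ i, V 0 i * V t i := by
      apply Finset.sum_congr rfl; intro i _; simp [hV0]
    rw [hVsum, key, hNid]
    calc c 0 * c t + ∑ i, ξ 0 i * ξ t i
        ≤ c 0 ^ 2 / (1 + t) + (∑ i, ξ 0 i ^ 2) / (1 + t) := add_le_add h1 h2
      _ = (c 0 ^ 2 + ∑ i, ξ 0 i ^ 2) / (1 + t) := by ring
  rcases Nat.eq_zero_or_pos N with hN | hN
  · subst hN
    simp [Finset.univ_eq_empty]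
    positivity
  · have hNpos : (0:ℝ) < N := by exact_mod_cast hN
    rw [div_mul_eq_mul_div, one_mul, div_le_div_iff₀ hNpos h1t] at *
    calc (∑ i, V t i) * (1 + t) ≤ ((N : ℝ) / (1 + t)) * (1 + t) := by
          exact mul_le_mul_of_nonneg_right hsum (le_of_lt h1t)
      _ = 1 * (N : ℝ) := by field_simp
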